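/- Let p be an odd prime and let L be a ℤ_p-lattice of rank k ≥ 4 with L ≅ ⟨ε₁, p^{e₂}ε₂, …, p^{e_k}ε_k⟩, 0 ≤ e₂ ≤ ⋯ ≤ e_k, ε_i ∈ ℤ_p^×. If the ternary sublattice ⟨ε₁, p^{e₂}ε₂, p^{e₃}ε₃⟩ is anisotropic, then for any vectors x, y ∈ L with ord_p(Q(x)) = ord_p(Q(y)) = ν_p(L), one has B(x,y) ∈ p^{ν_p(L)-1}ℤ_p. -/

import Mathlib

/-- `nuS p QS s` is `ord_p(s·p^{2u})` for the least `u ≥ 0` with `s·p^{2u} ∈ QS`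
(`⊤` if no such `u` exists). -/
noncomputable def nuS (p : ℕ) [Fact p.Prime] (QS : Set ℤ_[p]) (s : ℤ_[p]) : ℕ∞ :=
  sInf {m : ℕ∞ | ∃ u : ℕ, m = ((s.valuation + 2 * u : ℕ) : ℕ∞) ∧
    s * (p : ℤ_[p]) ^ (2 * u) ∈ QS}

/-- The maximum of `nuS p QS s` over `s ∈ SC`. -/
noncomputable def nuMax (p : ℕ) [Fact p.Prime] (QS SC : Set ℤ_[p]) : ℕ∞ :=
  sSup (nuS p QS '' SC)

/-- The set `SC_p` of square-class representatives: `{1,3,5,7,2,6,10,14}` for `p = 2`,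
and `{1, Δ, p, pΔ}` for odd `p`, where `Δ` is a (chosen) nonsquare unit. -/
def SCgen (p : ℕ) [Fact p.Prime] (Δ : ℤ_[p]) : Set ℤ_[p] :=
  if p = 2 then {1, 3, 5, 7, 2, 6, 10, 14} else {1, Δ, (p : ℤ_[p]), (p : ℤ_[p]) * Δ}

/-!
Suppose `B(x,y) = b p^m` with `b` a unit and `m ≤ ν - 2`. For `m ≤ N < ν` and any unit `η`,
choosing `T = p^(N-m) t` with `2tb = η` gives
`Q(x + T y) = Q(x) + 2T B(x,y) + T² Q(y) ≡ p^N η (mod p^(N+1))`, and since `p` is odd, Hensel's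
lemma removes the error by a unit square, so `L` represents `p^N η` exactly. With `N ∈ {m, m+1}`
of the right parity, every class in `SC_p` is then represented at valuation `≤ m + 1 < ν`,
contradicting the definition of `ν_p(L)`.
-/

namespace PadicInt

variable {p : ℕ} [Fact p.Prime]

theorem isUnit_two (hp : p ≠ 2) : IsUnit (2 : ℤ_[p]) := by
  have h : Nat.Coprime p 2 := (Nat.coprime_primes Fact.out Nat.prime_two).mpr hp
  exact_mod_cast isUnit_iff.mpr (norm_natCast_eq_one_iff.mpr h)

theorem valuation_eq_zero_of_isUnit {u : ℤ_[p]} (hu : IsUnit u) : u.valuation = 0 := by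
  obtain ⟨v, hv⟩ := hu.exists_right_inv
  have := valuation_mul hu.ne_zero (right_ne_zero_of_mul_eq_one hv)
  rw [hv, valuation_one] at this
  omega

theorem pow_valuation_dvd (x : ℤ_[p]) : (p : ℤ_[p]) ^ x.valuation ∣ x := by
  rcases eq_or_ne x 0 with rfl | hx
  · exact dvd_zero _
  · exact ⟨_, (unitCoeff_spec hx).trans (mul_comm _ _)⟩

theorem exists_unit_sq_eq_one_add_p_mul (hp : p ≠ 2) (r : ℤ_[p]) :
    ∃ c : ℤ_[p]ˣ, (c : ℤ_[p]) ^ 2 = 1 + p * r := by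
  have hpr : ‖(p : ℤ_[p]) * r‖ < 1 := (norm_lt_one_iff_dvd _).mpr (dvd_mul_right _ _)
  set F : Polynomial ℤ_[p] := Polynomial.X ^ 2 - Polynomial.C (1 + (p : ℤ_[p]) * r)
  have hnorm : ‖F.aeval (1 : ℤ_[p])‖ < ‖F.derivative.aeval (1 : ℤ_[p])‖ ^ 2 := by
    simpa [F, one_add_one_eq_two, isUnit_iff.mp (isUnit_two hp)] using hpr
  obtain ⟨z, hz, -⟩ := hensels_lemma hnorm
  have hz2 : z ^ 2 = 1 + p * r := by simpa [F, sub_eq_zero] using hz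
  have hunit : IsUnit (1 + (p : ℤ_[p]) * r) := by
    simpa using IsLocalRing.isUnit_one_sub_self_of_mem_nonunits _
      (mem_nonunits.mpr ((norm_neg ((p : ℤ_[p]) * r)).trans_lt hpr))
  exact ⟨((isUnit_pow_iff two_ne_zero).mp (hz2 ▸ hunit)).unit, hz2⟩

end PadicInt

theorem LinearMap.BilinForm.apply_smul_add_smul_self {R M : Type*} [CommRing R]
    [AddCommGroup M] [Module R M] {B : LinearMap.BilinForm R M} (hB : B.IsSymm)
    (c T : R) (x y : M) :
    B (c • (x + T • y)) (c • (x + T • y)) = c ^ 2 * (B x x + 2 * T * B x y + T ^ 2 * B y y) := by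
  simp only [map_add, map_smul, LinearMap.add_apply, LinearMap.smul_apply, smul_eq_mul,
    hB.eq y x]
  ring

theorem exists_apply_self_eq_pow_mul_unit {p : ℕ} [Fact p.Prime] {M : Type*} [AddCommGroup M]
    [Module ℤ_[p] M] (hp : p ≠ 2) {B : LinearMap.BilinForm ℤ_[p] M}
    (hB : B.IsSymm) {x y : M} {m N : ℕ} (hmN : m ≤ N) (b : ℤ_[p]ˣ)
    (hxy : B x y = b * (p : ℤ_[p]) ^ m) (hx : (p : ℤ_[p]) ^ (N + 1) ∣ B x x)
    (hy : (p : ℤ_[p]) ^ (N + 1) ∣ B y y) (η : ℤ_[p]ˣ) :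
    ∃ z, B z z = (p : ℤ_[p]) ^ N * η := by
  obtain ⟨t, ht⟩ : 2 * (b : ℤ_[p]) ∣ η := ((PadicInt.isUnit_two hp).mul b.isUnit).dvd
  set T : ℤ_[p] := (p : ℤ_[p]) ^ (N - m) * t
  have hcross : 2 * T * B x y = (p : ℤ_[p]) ^ N * η := by
    rw [hxy, ht, ← pow_sub_mul_pow (p : ℤ_[p]) hmN]
    ring
  obtain ⟨D, hD⟩ : (p : ℤ_[p]) ^ (N + 1) ∣ B x x + T ^ 2 * B y y := dvd_add hx (hy.mul_left _)
  obtain ⟨c, hc⟩ := PadicInt.exists_unit_sq_eq_one_add_p_mul hp (D * ↑η⁻¹)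
  refine ⟨(c⁻¹ : ℤ_[p]ˣ) • (x + T • y), ?_⟩
  have hc' : ((c⁻¹ : ℤ_[p]ˣ) : ℤ_[p]) ^ 2 * (c : ℤ_[p]) ^ 2 = 1 := by
    rw [← mul_pow, Units.inv_mul, one_pow]
  have hη : (η : ℤ_[p]) * ↑η⁻¹ = 1 := η.mul_inv
  rw [Units.smul_def, LinearMap.BilinForm.apply_smul_add_smul_self hB]
  linear_combination (↑(c⁻¹) ^ 2 : ℤ_[p]) * (hD + hcross)
    - (p : ℤ_[p]) ^ N * ↑η * (↑(c⁻¹) ^ 2 : ℤ_[p]) * hc + (p : ℤ_[p]) ^ N * ↑η * hc'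
    - (p : ℤ_[p]) ^ (N + 1) * D * (↑(c⁻¹) ^ 2 : ℤ_[p]) * hη

section SquareClasses

variable {p : ℕ} [Fact p.Prime] {QS : Set ℤ_[p]}

theorem nuS_le_of_mem {s : ℤ_[p]} {u : ℕ} (hu : s * (p : ℤ_[p]) ^ (2 * u) ∈ QS) :
    nuS p QS s ≤ ((s.valuation + 2 * u : ℕ) : ℕ∞) :=
  sInf_le ⟨u, rfl, hu⟩

theorem nuS_le_succ_of_forall_pow_mul_unit_mem {m : ℕ}
    (hQS : ∀ (η : ℤ_[p]ˣ) (N : ℕ), m ≤ N → N ≤ m + 1 → (p : ℤ_[p]) ^ N * η ∈ QS)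
    {s : ℤ_[p]} (hs : s ≠ 0) (hsv : s.valuation ≤ m + 1) :
    nuS p QS s ≤ ((m + 1 : ℕ) : ℕ∞) := by
  set u := (m + 1 - s.valuation) / 2
  have hmem : s * (p : ℤ_[p]) ^ (2 * u) ∈ QS := by
    rw [PadicInt.unitCoeff_spec hs, mul_assoc, ← pow_add, mul_comm]
    exact hQS _ _ (by omega) (by omega)
  exact (nuS_le_of_mem hmem).trans (by norm_cast; omega)

theorem ne_zero_and_valuation_le_one_of_mem_SCgen (hp : p ≠ 2) {Δ : ℤ_[p]} (hΔ : IsUnit Δ) :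
    ∀ s ∈ SCgen p Δ, s ≠ 0 ∧ s.valuation ≤ 1 := by
  have hpΔ : ((p : ℤ_[p]) * Δ).valuation = 1 := by
    simpa [PadicInt.valuation_eq_zero_of_isUnit hΔ] using
      PadicInt.valuation_p_pow_mul 1 Δ hΔ.ne_zero
  simp only [SCgen, if_neg hp, Set.mem_insert_iff, Set.mem_singleton_iff]
  rintro s (rfl | rfl | rfl | rfl)
  · simp
  · simp [hΔ.ne_zero, PadicInt.valuation_eq_zero_of_isUnit hΔ]
  · simp [(Fact.out : p.Prime).ne_zero]
  · simp [hpΔ, hΔ.ne_zero, (Fact.out : p.Prime).ne_zero]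

theorem nuMax_SCgen_le_succ (hp : p ≠ 2) {Δ : ℤ_[p]} (hΔ : IsUnit Δ) {m : ℕ}
    (hQS : ∀ (η : ℤ_[p]ˣ) (N : ℕ), m ≤ N → N ≤ m + 1 → (p : ℤ_[p]) ^ N * η ∈ QS) :
    nuMax p QS (SCgen p Δ) ≤ ((m + 1 : ℕ) : ℕ∞) := by
  refine sSup_le ?_
  rintro _ ⟨s, hs, rfl⟩
  obtain ⟨hs0, hsv⟩ := ne_zero_and_valuation_le_one_of_mem_SCgen hp hΔ s hs
  exact nuS_le_succ_of_forall_pow_mul_unit_mem hQS hs0 (by omega)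

end SquareClasses

section Diagonal

variable {R : Type*} [CommRing R]

def diagonalBilinForm (k : ℕ) (c : ℕ → R) : LinearMap.BilinForm R (ℕ → R) :=
  LinearMap.mk₂ R (fun x y => ∑ i ∈ Finset.range k, c i * x i * y i)
    (fun _ _ _ => by simp only [Pi.add_apply, ← Finset.sum_add_distrib, add_mul, mul_add])
    (fun _ _ _ => by
      simp only [Pi.smul_apply, smul_eq_mul, Finset.mul_sum, mul_assoc, mul_left_comm])
    (fun _ _ _ => by simp only [Pi.add_apply, ← Finset.sum_add_distrib, mul_add])
    (fun _ _ _ => by simp only [Pi.smul_apply, smul_eq_mul, Finset.mul_sum, mul_left_comm])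

theorem diagonalBilinForm_apply (k : ℕ) (c : ℕ → R) (x y : ℕ → R) :
    diagonalBilinForm k c x y = ∑ i ∈ Finset.range k, c i * x i * y i :=
  rfl

theorem diagonalBilinForm_apply_self (k : ℕ) (c : ℕ → R) (x : ℕ → R) :
    diagonalBilinForm k c x x = ∑ i ∈ Finset.range k, c i * x i ^ 2 := by
  simp only [diagonalBilinForm_apply, sq, mul_assoc]

theorem diagonalBilinForm_isSymm (k : ℕ) (c : ℕ → R) : (diagonalBilinForm k c).IsSymm :=
  ⟨fun x y => by simp only [diagonalBilinForm_apply, mul_right_comm]⟩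

end Diagonal

theorem stmt_10_general (p : ℕ) [Fact p.Prime] (hp : p ≠ 2)
    (Δ : ℤ_[p]) (hΔ : IsUnit Δ ∧ ¬IsSquare Δ)
    (k : ℕ) (e : ℕ → ℕ) (ε : ℕ → ℤ_[p]ˣ)
    (n : ℕ)
    (hnu : nuMax p {c | ∃ x : ℕ → ℤ_[p],
        (∑ i ∈ Finset.range k, (p : ℤ_[p]) ^ (e i) * (ε i : ℤ_[p]) * (x i) ^ 2) = c}
        (SCgen p Δ) = (n : ℕ∞))
    (x y : ℕ → ℤ_[p])
    (hxv : (∑ i ∈ Finset.range k,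
        (p : ℤ_[p]) ^ (e i) * (ε i : ℤ_[p]) * (x i) ^ 2).valuation = (n : ℤ))
    (hyv : (∑ i ∈ Finset.range k,
        (p : ℤ_[p]) ^ (e i) * (ε i : ℤ_[p]) * (y i) ^ 2).valuation = (n : ℤ)) :
    (p : ℤ_[p]) ^ (n - 1) ∣
      ∑ i ∈ Finset.range k, (p : ℤ_[p]) ^ (e i) * (ε i : ℤ_[p]) * x i * y i := by
  set B := diagonalBilinForm k fun i => (p : ℤ_[p]) ^ e i * ε i
  have hQ : ∀ z, B z z = ∑ i ∈ Finset.range k, (p : ℤ_[p]) ^ (e i) * (ε i : ℤ_[p]) * (z i) ^ 2 :=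
    diagonalBilinForm_apply_self k _
  change (p : ℤ_[p]) ^ (n - 1) ∣ B x y
  by_contra hdvd
  have hB0 : B x y ≠ 0 := fun h => hdvd (h ▸ dvd_zero _)
  set m := (B x y).valuation
  have hmn : m + 2 ≤ n := by
    by_contra h
    exact hdvd ((pow_dvd_pow _ (by omega)).trans (PadicInt.pow_valuation_dvd _))
  have hdvd_self : ∀ z, (B z z).valuation = n → ∀ N, N + 1 ≤ n → (p : ℤ_[p]) ^ (N + 1) ∣ B z z :=
    fun z hz N hN => (pow_dvd_pow _ (hz ▸ hN)).trans (PadicInt.pow_valuation_dvd _)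
  have hle : (n : ℕ∞) ≤ ((m + 1 : ℕ) : ℕ∞) := by
    rw [← hnu]
    refine nuMax_SCgen_le_succ hp hΔ.1 fun η N hmN hNm => ?_
    obtain ⟨z, hz⟩ := exists_apply_self_eq_pow_mul_unit hp (diagonalBilinForm_isSymm k _) hmN _
      (PadicInt.unitCoeff_spec hB0) (hdvd_self x (by rw [hQ]; exact_mod_cast hxv) N (by omega))
      (hdvd_self y (by rw [hQ]; exact_mod_cast hyv) N (by omega)) η
    exact ⟨z, (hQ z).symm.trans hz⟩
  exact absurd (ENat.natCast_le_natCast.mp hle) (by omega)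

/-- For an odd prime `p` and a diagonal lattice `L ≅ ⟨ε₁, p^{e₂}ε₂, …, p^{e_k}ε_k⟩`
of rank `k ≥ 4` whose leading ternary sublattice is anisotropic, any two vectors
`x, y ∈ L` with `ord_p(Q(x)) = ord_p(Q(y)) = ν_p(L)` satisfy
`B(x,y) ∈ p^{ν_p(L)-1}ℤ_p`. -/
theorem stmt_10 (p : ℕ) [Fact p.Prime] (hp : p ≠ 2)
    (Δ : ℤ_[p]) (hΔ : IsUnit Δ ∧ ¬IsSquare Δ)
    (k : ℕ) (hk : 4 ≤ k) (e : ℕ → ℕ) (ε : ℕ → ℤ_[p]ˣ)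
    (he0 : e 0 = 0) (hmono : ∀ i j, i ≤ j → j < k → e i ≤ e j)
    (haniso : ∀ v : Fin 3 → ℚ_[p],
      ((ε 0 : ℤ_[p]) : ℚ_[p]) * v 0 ^ 2 +
        (p : ℚ_[p]) ^ (e 1) * ((ε 1 : ℤ_[p]) : ℚ_[p]) * v 1 ^ 2 +
        (p : ℚ_[p]) ^ (e 2) * ((ε 2 : ℤ_[p]) : ℚ_[p]) * v 2 ^ 2 = 0 → v = 0)
    (n : ℕ)
    (hnu : nuMax p {c | ∃ x : ℕ → ℤ_[p],
        (∑ i ∈ Finset.range k, (p : ℤ_[p]) ^ (e i) * (ε i : ℤ_[p]) * (x i) ^ 2) = c}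
        (SCgen p Δ) = (n : ℕ∞))
    (x y : ℕ → ℤ_[p])
    (hx0 : (∑ i ∈ Finset.range k, (p : ℤ_[p]) ^ (e i) * (ε i : ℤ_[p]) * (x i) ^ 2) ≠ 0)
    (hy0 : (∑ i ∈ Finset.range k, (p : ℤ_[p]) ^ (e i) * (ε i : ℤ_[p]) * (y i) ^ 2) ≠ 0)
    (hxv : (∑ i ∈ Finset.range k,
        (p : ℤ_[p]) ^ (e i) * (ε i : ℤ_[p]) * (x i) ^ 2).valuation = (n : ℤ))
    (hyv : (∑ i ∈ Finset.range k,
        (p : ℤ_[p]) ^ (e i) * (ε i : ℤ_[p]) * (y i) ^ 2).valuation = (n : ℤ)) :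
    (p : ℤ_[p]) ^ (n - 1) ∣
      ∑ i ∈ Finset.range k, (p : ℤ_[p]) ^ (e i) * (ε i : ℤ_[p]) * x i * y i :=
  stmt_10_general p hp Δ hΔ k e ε n hnu x y hxv hyv
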